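/- arXiv:1402.5431 — 4 statements merged into one kernel-verified Lean document; each statement's English description precedes it below -/
import Mathlib

section
/- For any real α, ξ and ω > 0, the function f(x) = 2·φ((x−ξ)/ω)·Φ(α(x−ξ)/ω)/ω, where φ and Φ are the standard normal density and distribution function, is a probability density: it is nonnegative and integrates to 1 over ℝ. -/
open Real MeasureTheory

/-- Standard normal density. -/
noncomputable def stdNormalPDF (x : ℝ) : ℝ :=
  (Real.sqrt (2 * Real.pi))⁻¹ * Real.exp (-x ^ 2 / 2)

/-- Standard normal distribution function. -/
noncomputable def stdNormalCDF (x : ℝ) : ℝ :=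
  ∫ t in Set.Iic x, stdNormalPDF t

lemma pdf_nonneg (x : ℝ) : 0 ≤ stdNormalPDF x := by
  unfold stdNormalPDF; positivity

lemma pdf_integrable : Integrable stdNormalPDF := by
  have : stdNormalPDF = fun x => (Real.sqrt (2 * Real.pi))⁻¹ * Real.exp (-(1/2) * x ^ 2) := by
    funext x; unfold stdNormalPDF; ring_nf
  rw [this]
  exact (integrable_exp_neg_mul_sq (by norm_num)).const_mul _

lemma pdf_integral : ∫ x, stdNormalPDF x = 1 := by
  unfold stdNormalPDF
  rw [integral_const_mul]
  have : (fun x : ℝ => Real.exp (-x ^ 2 / 2)) = fun x => Real.exp (-(1/2) * x ^ 2) := by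
    funext x; ring_nf
  rw [this, integral_gaussian]
  rw [show (π / (1/2)) = 2 * π by ring]
  rw [inv_mul_cancel₀ (by positivity)]

lemma pdf_even (x : ℝ) : stdNormalPDF (-x) = stdNormalPDF x := by
  unfold stdNormalPDF; ring_nf

lemma cdf_nonneg (x : ℝ) : 0 ≤ stdNormalCDF x :=
  integral_nonneg fun t => pdf_nonneg t

lemma cdf_le_one (x : ℝ) : stdNormalCDF x ≤ 1 := by
  rw [← pdf_integral]
  exact setIntegral_le_integral pdf_integrable (Filter.Eventually.of_forall pdf_nonneg)

lemma cdf_add (x : ℝ) : stdNormalCDF x + stdNormalCDF (-x) = 1 := by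
  unfold stdNormalCDF
  have h1 : (∫ t in Set.Iic (-x), stdNormalPDF t) = ∫ t in Set.Ioi x, stdNormalPDF t := by
    calc (∫ t in Set.Iic (-x), stdNormalPDF t)
        = ∫ t in Set.Iic (-x), stdNormalPDF (-t) :=
          setIntegral_congr_fun measurableSet_Iic fun t _ => (pdf_even t).symm
      _ = ∫ t in Set.Ioi (-(-x)), stdNormalPDF t := integral_comp_neg_Iic (-x) stdNormalPDF
      _ = ∫ t in Set.Ioi x, stdNormalPDF t := by rw [neg_neg]
  rw [h1, ← pdf_integral]
  exact intervalIntegral.integral_Iic_add_Ioi pdf_integrable.integrableOn pdf_integrable.integrableOn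

lemma cdf_measurable : Measurable stdNormalCDF := by
  have : Monotone stdNormalCDF := fun a b hab =>
    setIntegral_mono_set pdf_integrable.integrableOn
      (Filter.Eventually.of_forall pdf_nonneg)
      (HasSubset.Subset.eventuallyLE (Set.Iic_subset_Iic.mpr hab))
  exact this.measurable

lemma g_integrable (α : ℝ) : Integrable (fun x => 2 * stdNormalPDF x * stdNormalCDF (α * x)) := by
  have hm : AEStronglyMeasurable (fun x => 2 * stdNormalPDF x * stdNormalCDF (α * x)) volume := by
    refine AEStronglyMeasurable.mul ?_ ?_
    · exact (pdf_integrable.aestronglyMeasurable.const_mul 2)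
    · exact (cdf_measurable.comp (measurable_const_mul α)).aestronglyMeasurable
  refine Integrable.mono' ((pdf_integrable.const_mul 2)) hm ?_
  refine Filter.Eventually.of_forall fun x => ?_
  have hp := pdf_nonneg x
  have hc0 := cdf_nonneg (α * x)
  have hc1 := cdf_le_one (α * x)
  rw [Real.norm_eq_abs, abs_mul, abs_of_nonneg (by linarith : (0:ℝ) ≤ 2 * stdNormalPDF x),
      abs_of_nonneg hc0]
  nlinarith

lemma g_integral (α : ℝ) : (∫ x, 2 * stdNormalPDF x * stdNormalCDF (α * x)) = 1 := by
  set g := fun x => 2 * stdNormalPDF x * stdNormalCDF (α * x) with hg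
  have hneg : (∫ x, g (-x)) = ∫ x, g x := by
    have h := MeasureTheory.Measure.integral_comp_mul_left g (-1)
    simp only [neg_one_mul, smul_eq_mul] at h
    norm_num at h
    exact h
  have hsum : (∫ x, (g x + g (-x))) = ∫ x, 2 * stdNormalPDF x := by
    refine integral_congr_ae (Filter.Eventually.of_forall fun x => ?_)
    simp only [hg, pdf_even, mul_neg]
    have h := cdf_add (α * x)
    linear_combination (2 * stdNormalPDF x) * h
  have hgi := g_integrable α
  have hgni : Integrable (fun x => g (-x)) := by
    have h := hgi.comp_mul_left' (R := -1) (by norm_num)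
    simp only [neg_one_mul] at h
    exact h
  have hkey : (∫ x, g x) + (∫ x, g (-x)) = ∫ x, 2 * stdNormalPDF x := by
    rw [← integral_add hgi hgni]; exact hsum
  rw [hneg] at hkey
  have h2 : (∫ x, 2 * stdNormalPDF x) = 2 := by
    rw [integral_const_mul, pdf_integral]; ring
  linarith

/-- The univariate skew-normal density `2 φ((x-ξ)/ω) Φ(α(x-ξ)/ω) / ω` is a
probability density: it is nonnegative and integrates to one. -/
theorem skew_normal_density_is_pdf (α ξ ω : ℝ) (hω : 0 < ω) :
    (∀ x : ℝ, 0 ≤ 2 * stdNormalPDF ((x - ξ) / ω) * stdNormalCDF (α * ((x - ξ) / ω)) / ω) ∧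
    (∫ x : ℝ, 2 * stdNormalPDF ((x - ξ) / ω) * stdNormalCDF (α * ((x - ξ) / ω)) / ω) = 1 := by
  constructor
  · intro x
    have h1 := pdf_nonneg ((x - ξ) / ω)
    have h2 := cdf_nonneg (α * ((x - ξ) / ω))
    have : 0 ≤ 2 * stdNormalPDF ((x - ξ) / ω) * stdNormalCDF (α * ((x - ξ) / ω)) := by
      nlinarith
    positivity
  · have h1 : (∫ x : ℝ, 2 * stdNormalPDF ((x - ξ) / ω) * stdNormalCDF (α * ((x - ξ) / ω)) / ω)
        = ∫ x : ℝ, (fun y : ℝ => 2 * stdNormalPDF (y / ω) * stdNormalCDF (α * (y / ω)) / ω) (x - ξ) :=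
      rfl
    rw [h1, integral_sub_right_eq_self (μ := volume)
      (fun y : ℝ => 2 * stdNormalPDF (y / ω) * stdNormalCDF (α * (y / ω)) / ω) ξ]
    have h2 : (∫ x : ℝ, (fun y : ℝ => 2 * stdNormalPDF (y / ω) * stdNormalCDF (α * (y / ω)) / ω) x)
        = ∫ x : ℝ, (fun y : ℝ => 2 * stdNormalPDF y * stdNormalCDF (α * y) / ω) (x / ω) := rfl
    rw [h2, MeasureTheory.Measure.integral_comp_div
      (fun y : ℝ => 2 * stdNormalPDF y * stdNormalCDF (α * y) / ω) ω]
    rw [smul_eq_mul, abs_of_pos hω]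
    have h3 : (∫ x : ℝ, 2 * stdNormalPDF x * stdNormalCDF (α * x) / ω)
        = (∫ x : ℝ, 2 * stdNormalPDF x * stdNormalCDF (α * x)) / ω := integral_div ω _
    rw [h3, g_integral]
    field_simp
end

section
/- Let (X₀, X₁) be bivariate normal with mean 0, unit variances and correlation δ ∈ (−1,1). Then the conditional distribution of X₀ given X₁ > 0 has density f(x) = 2·φ(x)·Φ(αx), where α = δ/√(1−δ²). -/
open Real MeasureTheory ProbabilityTheory
open scoped NNReal ENNReal

/-- Density of the centered bivariate normal with unit variances and
correlation `δ`. -/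
noncomputable def biNormalPDF (δ x y : ℝ) : ℝ :=
  (2 * Real.pi * Real.sqrt (1 - δ ^ 2))⁻¹ *
    Real.exp (-(x ^ 2 - 2 * δ * x * y + y ^ 2) / (2 * (1 - δ ^ 2)))

/-!
Completing the square factors the bivariate density as `φ(x)` times the `N(δx, 1 - δ²)`
density in `y`. Hence
`P(X₀ ∈ s, X₁ > 0) = ∫_s φ(x) P(N(δx, 1 - δ²) > 0) dx = ∫_s φ(x) Φ(αx) dx`,
while `P(X₁ > 0) = P(X₀ > 0) = 1/2` by the symmetry of the density in its two arguments.
-/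

open Set

lemma gaussianPDFReal_zero_one : gaussianPDFReal 0 1 = stdNormalPDF := by
  funext x
  simp [gaussianPDFReal, stdNormalPDF, neg_div]

lemma gaussianReal_zero_one_Iic (t : ℝ) :
    gaussianReal 0 1 (Iic t) = ENNReal.ofReal (stdNormalCDF t) := by
  rw [gaussianReal_apply_eq_integral _ one_ne_zero, gaussianPDFReal_zero_one, stdNormalCDF]

lemma gaussianReal_zero_one_Ioi_zero : gaussianReal 0 1 (Ioi (0 : ℝ)) = 1 / 2 := by
  have := nullSingletonClass_gaussianReal (μ := 0) one_ne_zero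
  have hsymm : gaussianReal 0 1 (Iic (0 : ℝ)) = gaussianReal 0 1 (Ioi 0) := by
    rw [← measure_congr Iio_ae_eq_Iic]
    conv_lhs => rw [← neg_zero, ← gaussianReal_map_neg]
    rw [Measure.map_apply measurable_neg measurableSet_Iio, neg_zero]
    simp [Set.preimage, Set.Ioi]
  have htotal :=
    measure_add_measure_compl (μ := gaussianReal 0 1) (measurableSet_Iic (a := (0 : ℝ)))
  rw [compl_Iic, measure_univ, hsymm] at htotal
  rw [ENNReal.eq_div_iff two_ne_zero ENNReal.ofNat_ne_top, two_mul, htotal]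

lemma gaussianReal_eq_map_const_sub_mul (m : ℝ) (v : ℝ≥0) :
    gaussianReal m v = (gaussianReal 0 1).map (fun z ↦ m - √v * z) := by
  have hv : NNReal.mk (√v ^ 2) (sq_nonneg _) * 1 = v := by ext; simp
  rw [← Function.comp_def (m - ·) (√v * ·),
    ← Measure.map_map (measurable_const_sub m) (measurable_const_mul _),
    gaussianReal_map_const_mul, gaussianReal_map_const_sub, hv, mul_zero, sub_zero]

lemma gaussianReal_Ioi_zero (m : ℝ) {v : ℝ≥0} (hv : v ≠ 0) :
    gaussianReal m v (Ioi 0) = ENNReal.ofReal (stdNormalCDF (m / √v)) := by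
  have := nullSingletonClass_gaussianReal (μ := 0) one_ne_zero
  have hsqrt : 0 < √(v : ℝ) := Real.sqrt_pos.mpr (by positivity)
  have hpre : (fun z ↦ m - √v * z) ⁻¹' Ioi 0 = Iio (m / √v) := by
    ext z
    simp [lt_div_iff₀ hsqrt, mul_comm]
  rw [gaussianReal_eq_map_const_sub_mul, Measure.map_apply (by fun_prop) measurableSet_Ioi, hpre,
    measure_congr Iio_ae_eq_Iic, gaussianReal_zero_one_Iic]

lemma biNormalPDF_comm (δ x y : ℝ) : biNormalPDF δ x y = biNormalPDF δ y x := by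
  unfold biNormalPDF; ring_nf

lemma biNormalPDF_eq_mul_gaussianPDFReal {δ : ℝ} (hδ : 0 < 1 - δ ^ 2) (x y : ℝ) :
    biNormalPDF δ x y
      = gaussianPDFReal 0 1 x * gaussianPDFReal (δ * x) (1 - δ ^ 2).toNNReal y := by
  have h2π : (0 : ℝ) ≤ 2 * π := by positivity
  unfold biNormalPDF gaussianPDFReal
  rw [NNReal.coe_one, Real.coe_toNNReal _ hδ.le, mul_one (2 * π), sub_zero, mul_one 2,
    mul_mul_mul_comm, ← Real.exp_add, ← mul_inv, Real.sqrt_mul h2π, ← mul_assoc,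
    Real.mul_self_sqrt h2π]
  congr 2
  field_simp
  ring

noncomputable def biNormal (δ : ℝ) : Measure (ℝ × ℝ) :=
  volume.withDensity fun p ↦ ENNReal.ofReal (biNormalPDF δ p.1 p.2)

lemma biNormal_prod_comm (δ : ℝ) (s t : Set ℝ) :
    biNormal δ (s ×ˢ t) = biNormal δ (t ×ˢ s) := by
  simp only [biNormal, withDensity_apply', Measure.volume_eq_prod, ← Measure.prod_restrict]
  rw [← lintegral_prod_swap]
  simp only [Prod.fst_swap, Prod.snd_swap, biNormalPDF_comm δ]

lemma biNormal_prod {δ : ℝ} (hδ : 0 < 1 - δ ^ 2) (s t : Set ℝ) :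
    biNormal δ (s ×ˢ t)
      = ∫⁻ x in s,
          ENNReal.ofReal (stdNormalPDF x) * gaussianReal (δ * x) (1 - δ ^ 2).toNNReal t := by
  have hv : (1 - δ ^ 2).toNNReal ≠ 0 := by simpa using hδ
  have hmeas : Measurable fun p : ℝ × ℝ ↦ ENNReal.ofReal (biNormalPDF δ p.1 p.2) := by
    unfold biNormalPDF; fun_prop
  rw [biNormal, withDensity_apply', Measure.volume_eq_prod, ← Measure.prod_restrict,
    lintegral_prod _ hmeas.aemeasurable]
  refine lintegral_congr fun x ↦ ?_
  simp only [biNormalPDF_eq_mul_gaussianPDFReal hδ,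
    ENNReal.ofReal_mul' (gaussianPDFReal_nonneg _ _ _), gaussianPDFReal_zero_one]
  rw [lintegral_const_mul _ (measurable_gaussianPDFReal _ _).ennreal_ofReal,
    gaussianReal_apply _ hv]
  rfl

lemma biNormal_univ_prod_Ioi_zero {δ : ℝ} (hδ : 0 < 1 - δ ^ 2) :
    biNormal δ (univ ×ˢ Ioi 0) = 1 / 2 := by
  rw [biNormal_prod_comm, biNormal_prod hδ]
  simp only [measure_univ, mul_one, ← gaussianPDFReal_zero_one]
  rw [← gaussianReal_zero_one_Ioi_zero, gaussianReal_apply _ one_ne_zero]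
  rfl

lemma biNormal_prod_Ioi_zero {δ : ℝ} (hδ : 0 < 1 - δ ^ 2) (s : Set ℝ) :
    biNormal δ (s ×ˢ Ioi 0)
      = ∫⁻ x in s, ENNReal.ofReal (stdNormalPDF x * stdNormalCDF (δ / √(1 - δ ^ 2) * x)) := by
  have hv : (1 - δ ^ 2).toNNReal ≠ 0 := by simpa using hδ
  rw [biNormal_prod hδ]
  refine lintegral_congr fun x ↦ ?_
  rw [gaussianReal_Ioi_zero _ hv, Real.coe_toNNReal _ hδ.le, mul_div_right_comm,
    ENNReal.ofReal_mul (by unfold stdNormalPDF; positivity)]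

/-- If `(X₀, X₁)` is bivariate normal with mean `0`, unit variances and
correlation `δ ∈ (-1,1)`, then the conditional distribution of `X₀` given
`X₁ > 0` has density `x ↦ 2 φ(x) Φ(αx)` with `α = δ/√(1-δ²)`. -/
theorem conditional_biNormal_is_skew_normal (δ : ℝ) (hδ : δ ∈ Set.Ioo (-1 : ℝ) 1) :
    Measure.map Prod.fst
      (ProbabilityTheory.cond
        ((volume : Measure (ℝ × ℝ)).withDensity
          (fun p => ENNReal.ofReal (biNormalPDF δ p.1 p.2)))
        {p : ℝ × ℝ | 0 < p.2}) =
    (volume : Measure ℝ).withDensity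
      (fun x => ENNReal.ofReal
        (2 * stdNormalPDF x * stdNormalCDF (δ / Real.sqrt (1 - δ ^ 2) * x))) := by
  have hvar : 0 < 1 - δ ^ 2 := by nlinarith [hδ.1, hδ.2]
  change Measure.map Prod.fst (cond (biNormal δ) {p : ℝ × ℝ | 0 < p.2}) = _
  ext s hs
  have hevent : {p : ℝ × ℝ | 0 < p.2} = univ ×ˢ Ioi 0 := by ext; simp
  have hjoint : {p : ℝ × ℝ | 0 < p.2} ∩ Prod.fst ⁻¹' s = s ×ˢ Ioi 0 := by ext; simp [and_comm]
  rw [Measure.map_apply measurable_fst hs,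
    cond_apply (measurableSet_lt measurable_const measurable_snd), hjoint,
    biNormal_prod_Ioi_zero hvar, hevent, biNormal_univ_prod_Ioi_zero hvar, one_div, inv_inv,
    withDensity_apply _ hs, ← lintegral_const_mul' _ _ ENNReal.ofNat_ne_top]
  refine lintegral_congr fun x ↦ ?_
  rw [mul_assoc, ENNReal.ofReal_mul zero_le_two, ENNReal.ofReal_ofNat]
end

section
/- Mardia's skewness coefficient of the SDB skew-normal distribution admits the closed form γ_{1,d} = ((4−π)/2)² · (μ⁽³⁾)ᵀ Σ⁽⁻³⁾ μ⁽³⁾, where μ_j = √(2/π)·λ_j, μ⁽³⁾ has components μ_j³, Σ = Δ + (1−2/π)Λ² is the covariance matrix, and Σ⁽⁻³⁾ has entries (σ^{uv})³ given Σ⁻¹ = (σ^{uv}). -/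
open Real

/-- Mardia's skewness of the SDB skew-normal distribution:
`γ_{1,d} = Σ κ_{rst} κ_{r's't'} σ^{rr'} σ^{ss'} σ^{tt'}` equals
`((4-π)/2)² (μ⁽³⁾)ᵀ Σ⁽⁻³⁾ μ⁽³⁾`, where `κ_{rst} = ζ₃(0) λ_r³` for
`r = s = t` and `0` otherwise, `μ_j = √(2/π) λ_j`, and
`Σ = Δ + (1-2/π) Λ²`. -/
theorem sdb_mardia_skewness_closed_form {d : ℕ} (lam : Fin d → ℝ)
    (Δ : Matrix (Fin d) (Fin d) ℝ) (hΔ : Δ.PosDef)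
    (Sg : Matrix (Fin d) (Fin d) ℝ)
    (hSg : Sg = Δ + (1 - 2 / Real.pi) •
      Matrix.diagonal (fun i => lam i ^ 2))
    (κ : Fin d → Fin d → Fin d → ℝ)
    (hκ : ∀ r s t, κ r s t =
      if r = s ∧ s = t then
        (2 / Real.pi) ^ ((3 : ℝ) / 2) * (4 - Real.pi) / 2 * lam r ^ 3
      else 0) :
    (∑ r, ∑ s, ∑ t, ∑ r', ∑ s', ∑ t',
        κ r s t * κ r' s' t' * Sg⁻¹ r r' * Sg⁻¹ s s' * Sg⁻¹ t t')
      = ((4 - Real.pi) / 2) ^ 2 *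
        ∑ u, ∑ v, (Real.sqrt (2 / Real.pi) * lam u) ^ 3 *
          (Real.sqrt (2 / Real.pi) * lam v) ^ 3 * (Sg⁻¹ u v) ^ 3 := by
  have hc : (2 / Real.pi) ^ ((3:ℝ)/2) = (Real.sqrt (2/Real.pi))^3 := by
    rw [show ((3:ℝ)/2) = (1/2)*3 by ring, Real.rpow_mul (by positivity),
      Real.sqrt_eq_rpow, ← Real.rpow_natCast ((2/Real.pi) ^ ((1:ℝ)/2)) 3]
    norm_num
  simp only [hκ, ite_and, ite_mul, zero_mul, mul_ite, mul_zero,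
    Finset.sum_ite_irrel, Finset.sum_const_zero,
    Finset.sum_ite_eq, Finset.mem_univ, if_true, hc]
  rw [Finset.mul_sum]
  refine Finset.sum_congr rfl fun u _ => ?_
  rw [Finset.mul_sum]
  refine Finset.sum_congr rfl fun v _ => ?_
  ring
end

section
/- Mardia's excess kurtosis of the SDB skew-normal distribution admits the closed form γ_{2,d} = 2(π−3)·(μ⁽²⁾)ᵀ(I_d ⊙ Σ⁻¹)² μ⁽²⁾, where μ_j = √(2/π)λ_j, μ⁽²⁾ = (μ₁²,…,μ_d²)ᵀ, Σ = Δ + (1−2/π)Λ², and ⊙ denotes the Hadamard (componentwise) product, so I_d ⊙ Σ⁻¹ = diag(σ^{11},…,σ^{dd}). -/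
/-!
The fourth-cumulant tensor of the SDB skew-normal law is supported on the diagonal
`r = s = t = u`, so Mardia's contraction `Σ κ_{rstu} σ^{rs} σ^{tu}` collapses to
`Σ_r κ_{rrrr} (σ^{rr})²`; since `κ_{rrrr} = 2(π-3) μ_r⁴`, this is the quadratic form of
`diag(σ^{rr})²` evaluated at `μ⁽²⁾`.
-/

open Finset Matrix

theorem sum_diagonal_tensor_mul_mul {ι R : Type*} [Fintype ι] [DecidableEq ι]
    [CommSemiring R] (c : ι → R) (A : Matrix ι ι R) :
    ∑ r, ∑ s, ∑ t, ∑ u, (if r = s ∧ s = t ∧ t = u then c r else 0) * A r s * A t u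
      = ∑ r, c r * A r r ^ 2 := by
  simp [ite_and, sq, mul_assoc]

theorem dotProduct_diagonal_sq_mulVec_self {ι R : Type*} [Fintype ι] [DecidableEq ι]
    [CommSemiring R] (w v : ι → R) :
    v ⬝ᵥ (diagonal w ^ 2 *ᵥ v) = ∑ j, w j ^ 2 * v j ^ 2 := by
  rw [sq, diagonal_mul_diagonal]
  simp only [dotProduct, mulVec_diagonal]
  exact sum_congr rfl fun j _ => by ring

theorem sq_sq_sqrt_two_div_pi_mul (x : ℝ) :
    ((Real.sqrt (2 / Real.pi) * x) ^ 2) ^ 2 = (2 / Real.pi) ^ 2 * x ^ 4 := by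
  rw [mul_pow, Real.sq_sqrt (by positivity)]
  ring

theorem sdb_mardia_kurtosis_closed_form_general {d : ℕ} (lam : Fin d → ℝ)
    (Sg : Matrix (Fin d) (Fin d) ℝ)
    (κ : Fin d → Fin d → Fin d → Fin d → ℝ)
    (hκ : ∀ r s t u, κ r s t u =
      if r = s ∧ s = t ∧ t = u then
        2 * (Real.pi - 3) * (2 / Real.pi) ^ 2 * lam r ^ 4
      else 0) :
    (∑ r, ∑ s, ∑ t, ∑ u, κ r s t u * Sg⁻¹ r s * Sg⁻¹ t u)
      = 2 * (Real.pi - 3) *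
        dotProduct (fun j => (Real.sqrt (2 / Real.pi) * lam j) ^ 2)
          (((Matrix.diagonal fun j => Sg⁻¹ j j) ^ 2).mulVec
            fun j => (Real.sqrt (2 / Real.pi) * lam j) ^ 2) := by
  simp only [hκ]
  rw [sum_diagonal_tensor_mul_mul, dotProduct_diagonal_sq_mulVec_self, mul_sum]
  refine sum_congr rfl fun r _ => ?_
  rw [sq_sq_sqrt_two_div_pi_mul]
  ring

/-- Mardia's excess kurtosis of the SDB skew-normal distribution:
`γ_{2,d} = Σ κ_{rstu} σ^{rs} σ^{tu}` equals
`2(π-3) (μ⁽²⁾)ᵀ (I_d ⊙ Σ⁻¹)² μ⁽²⁾`, where `κ_{rstu} = 2(π-3)(2/π)² λ_r⁴`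
for `r = s = t = u` and `0` otherwise, `μ_j = √(2/π) λ_j`, and
`Σ = Δ + (1-2/π) Λ²`, with `I_d ⊙ Σ⁻¹ = diag(σ^{11},…,σ^{dd})`. -/
theorem sdb_mardia_kurtosis_closed_form {d : ℕ} (lam : Fin d → ℝ)
    (Δ : Matrix (Fin d) (Fin d) ℝ) (hΔ : Δ.PosDef)
    (Sg : Matrix (Fin d) (Fin d) ℝ)
    (hSg : Sg = Δ + (1 - 2 / Real.pi) •
      Matrix.diagonal (fun i => lam i ^ 2))
    (κ : Fin d → Fin d → Fin d → Fin d → ℝ)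
    (hκ : ∀ r s t u, κ r s t u =
      if r = s ∧ s = t ∧ t = u then
        2 * (Real.pi - 3) * (2 / Real.pi) ^ 2 * lam r ^ 4
      else 0) :
    (∑ r, ∑ s, ∑ t, ∑ u, κ r s t u * Sg⁻¹ r s * Sg⁻¹ t u)
      = 2 * (Real.pi - 3) *
        dotProduct (fun j => (Real.sqrt (2 / Real.pi) * lam j) ^ 2)
          (((Matrix.diagonal fun j => Sg⁻¹ j j) ^ 2).mulVec
            fun j => (Real.sqrt (2 / Real.pi) * lam j) ^ 2) :=
  sdb_mardia_kurtosis_closed_form_general lam Sg κ hκ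
end
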